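/- With c_1,...,c_{2m} as above (not all equal), the WEAT effect size d equals 2 if and only if c_1 = c_2 = ... = c_m and c_{m+1} = ... = c_{2m} with c_1 > c_{m+1} — equivalently, all first-half values equal a common value a and all second-half values equal a common value b with a > b. -/

import Mathlib

/-!
Let `a` and `b` be the means of the two halves, so that `μ = (a + b) / 2` and `d = (a - b) / σ`.
Applying the parallel-axis identity `∑ (x - u)² = ∑ (x - x̄)² + n (x̄ - u)²` to each half gives
`σ² = W / (2m) + ((a - b) / 2)²`, where `W ≥ 0` is the within-half sum of squares. Hence `d = 2`
exactly when `a > b` and `W = 0`, i.e. when each half is constant.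
-/

open Finset
open scoped BigOperators

namespace Finset

section Mean

variable {ι : Type*} (s : Finset ι) (f : ι → ℝ)

theorem sum_sq_sub_eq_sum_sq_sub_expect_add (u : ℝ) :
    ∑ i ∈ s, (f i - u) ^ 2
      = ∑ i ∈ s, (f i - 𝔼 j ∈ s, f j) ^ 2 + #s * (𝔼 j ∈ s, f j - u) ^ 2 := by
  have hcross : ∑ i ∈ s, (f i - 𝔼 j ∈ s, f j) = 0 := by
    rw [sum_sub_distrib, sum_const, nsmul_eq_mul, card_mul_expect, sub_self]
  calc ∑ i ∈ s, (f i - u) ^ 2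
      = ∑ i ∈ s, ((f i - 𝔼 j ∈ s, f j) ^ 2
          + 2 * (𝔼 j ∈ s, f j - u) * (f i - 𝔼 j ∈ s, f j) + (𝔼 j ∈ s, f j - u) ^ 2) :=
        sum_congr rfl fun _ _ => by ring
    _ = _ := by
        rw [sum_add_distrib, sum_add_distrib, ← mul_sum, hcross, sum_const, nsmul_eq_mul]
        ring

theorem sum_sq_sub_eq_zero_iff (u : ℝ) : ∑ i ∈ s, (f i - u) ^ 2 = 0 ↔ ∀ i ∈ s, f i = u := by
  simp only [sum_eq_zero_iff_of_nonneg fun _ _ => sq_nonneg _, sq_eq_zero_iff, sub_eq_zero]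

variable {s f}

theorem expect_eq_of_forall_eq (hs : s.Nonempty) {a : ℝ} (h : ∀ i ∈ s, f i = a) :
    𝔼 i ∈ s, f i = a := by
  rw [expect_congr rfl h, expect_const hs]

variable [DecidableEq ι] {t : Finset ι}

theorem expect_union_of_card_eq (hst : Disjoint s t) (hcard : #s = #t) :
    𝔼 i ∈ s ∪ t, f i = (𝔼 i ∈ s, f i + 𝔼 i ∈ t, f i) / 2 := by
  rw [expect_eq_sum_div_card, expect_eq_sum_div_card, expect_eq_sum_div_card, sum_union hst,
    card_union_of_disjoint hst, hcard]
  rcases (#t).eq_zero_or_pos with h | h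
  · simp [h]
  · field_simp
    push_cast
    ring

theorem sum_sq_sub_midpoint_union_of_card_eq (hst : Disjoint s t) (hcard : #s = #t) :
    ∑ i ∈ s ∪ t, (f i - (𝔼 j ∈ s, f j + 𝔼 j ∈ t, f j) / 2) ^ 2
      = ∑ i ∈ s, (f i - 𝔼 j ∈ s, f j) ^ 2 + ∑ i ∈ t, (f i - 𝔼 j ∈ t, f j) ^ 2
        + 2 * #s * ((𝔼 j ∈ s, f j - 𝔼 j ∈ t, f j) / 2) ^ 2 := by
  rw [sum_union hst, sum_sq_sub_eq_sum_sq_sub_expect_add s, sum_sq_sub_eq_sum_sq_sub_expect_add t,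
    hcard]
  ring

end Mean

theorem range_union_Ico_eq_range {m n : ℕ} (h : m ≤ n) : range m ∪ Ico m n = range n := by
  rw [range_eq_Ico, range_eq_Ico, Ico_union_Ico_eq_Ico (Nat.zero_le m) h]

theorem disjoint_range_Ico (m n : ℕ) : Disjoint (range m) (Ico m n) := by
  rw [range_eq_Ico]
  exact Ico_disjoint_Ico_consecutive 0 m n

end Finset

theorem sub_div_sqrt_add_sq_half_eq_two_iff {a b V : ℝ} (hV : 0 ≤ V) :
    (a - b) / √(V + ((a - b) / 2) ^ 2) = 2 ↔ b < a ∧ V = 0 := by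
  set σ := √(V + ((a - b) / 2) ^ 2) with hσ_def
  constructor
  · intro h
    have hσ0 : σ ≠ 0 := by
      rintro h0
      simp [h0] at h
    have hσpos : 0 < σ := lt_of_le_of_ne (Real.sqrt_nonneg _) (Ne.symm hσ0)
    have hab : a - b = 2 * σ := by
      field_simp at h
      linarith
    have hsq : σ ^ 2 = V + ((a - b) / 2) ^ 2 := Real.sq_sqrt (by positivity)
    rw [hab] at hsq
    exact ⟨by linarith, by linarith⟩
  · rintro ⟨hab, rfl⟩
    have hσ : σ = (a - b) / 2 := by rw [hσ_def, zero_add, Real.sqrt_sq (by linarith)]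
    rw [hσ]
    field_simp [(sub_pos.2 hab).ne']

theorem weat_effect_size_eq_two_iff_general (m : ℕ) (hm : 1 ≤ m) (c : ℕ → ℝ) (μ σ d : ℝ)
    (hμ : μ = (∑ i ∈ Finset.range (2 * m), c i) / (2 * m))
    (hσdef : σ = Real.sqrt ((∑ i ∈ Finset.range (2 * m), (c i - μ) ^ 2) / (2 * m)))
    (hd : d = ((1 / (m : ℝ)) * ∑ i ∈ Finset.range m, c i
        - (1 / (m : ℝ)) * ∑ i ∈ Finset.Ico m (2 * m), c i) / σ) :
    d = 2 ↔ ∃ a b : ℝ, a > b ∧ (∀ i < m, c i = a) ∧ (∀ i, m ≤ i → i < 2 * m → c i = b) := by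
  have hmR : (0 : ℝ) < m := by exact_mod_cast hm
  have hunion := (range_union_Ico_eq_range (by omega : m ≤ 2 * m)).symm
  have hdisj := disjoint_range_Ico m (2 * m)
  have hcard : #(range m) = #(Ico m (2 * m)) := by simp only [card_range, Nat.card_Ico]; omega
  set a := 𝔼 i ∈ range m, c i
  set b := 𝔼 i ∈ Ico m (2 * m), c i
  have hμ' : μ = (a + b) / 2 := by
    rw [hμ, ← expect_union_of_card_eq hdisj hcard, expect_eq_sum_div_card, ← hunion, card_range]
    push_cast
    rfl
  set W := ∑ i ∈ range m, (c i - a) ^ 2 + ∑ i ∈ Ico m (2 * m), (c i - b) ^ 2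
  have hσ' : σ = √(W / (2 * m) + ((a - b) / 2) ^ 2) := by
    rw [hσdef, hunion, hμ', sum_sq_sub_midpoint_union_of_card_eq hdisj hcard, card_range]
    congr 1
    field_simp
    ring
  have hd' : d = (a - b) / σ := by
    simp only [hd, a, b, expect_eq_sum_div_card, ← hcard, card_range]
    ring
  rw [hd', hσ', sub_div_sqrt_add_sq_half_eq_two_iff (by positivity), div_eq_zero_iff,
    or_iff_left (by positivity), add_eq_zero_iff_of_nonneg (by positivity) (by positivity),
    sum_sq_sub_eq_zero_iff, sum_sq_sub_eq_zero_iff]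
  constructor
  · rintro ⟨hab, h₁, h₂⟩
    exact ⟨a, b, hab, fun i hi => h₁ i (mem_range.2 hi), fun i hi hi' => h₂ i (mem_Ico.2 ⟨hi, hi'⟩)⟩
  · rintro ⟨a', b', hab, h₁, h₂⟩
    have h₁' : ∀ i ∈ range m, c i = a' := fun i hi => h₁ i (mem_range.1 hi)
    have h₂' : ∀ i ∈ Ico m (2 * m), c i = b' := fun i hi => h₂ i (mem_Ico.1 hi).1 (mem_Ico.1 hi).2
    have ha : a = a' := expect_eq_of_forall_eq (nonempty_range_iff.2 (by omega)) h₁'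
    have hb : b = b' := expect_eq_of_forall_eq (nonempty_Ico.2 (by omega)) h₂'
    exact ⟨by rwa [ha, hb], ha ▸ h₁', hb ▸ h₂'⟩

/-- For real numbers `c 0, ..., c (2m-1)` that are not all equal (`σ > 0`), the WEAT
effect size equals `2` iff all first-half values equal a common value `a` and all
second-half values equal a common value `b` with `a > b`. -/
theorem weat_effect_size_eq_two_iff (m : ℕ) (hm : 1 ≤ m) (c : ℕ → ℝ) (μ σ d : ℝ)
    (hμ : μ = (∑ i ∈ Finset.range (2 * m), c i) / (2 * m))
    (hσdef : σ = Real.sqrt ((∑ i ∈ Finset.range (2 * m), (c i - μ) ^ 2) / (2 * m)))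
    (hσ : 0 < σ)
    (hd : d = ((1 / (m : ℝ)) * ∑ i ∈ Finset.range m, c i
        - (1 / (m : ℝ)) * ∑ i ∈ Finset.Ico m (2 * m), c i) / σ) :
    d = 2 ↔ ∃ a b : ℝ, a > b ∧ (∀ i < m, c i = a) ∧ (∀ i, m ≤ i → i < 2 * m → c i = b) :=
  weat_effect_size_eq_two_iff_general m hm c μ σ d hμ hσdef hd
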